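/- arXiv:2506.02151 — 4 statements merged into one kernel-verified Lean document; each statement's English description precedes it below -/
import Mathlib

section
/- Let n, r ∈ ℕ with n ≥ 1, let a : [0,1] → ℂ, let f(θ) = ∑_{k=−r}^{r} f_k e^{ikθ} be a trigonometric polynomial with coefficients f_k ∈ ℂ satisfying |f_k| ≤ M for all k, and let G_n = {x_{1,n},…,x_{n,n}} ⊂ [0,1] be a grid with m(G_n) = max_{1≤i≤n} |x_{i,n} − i/n|. Suppose ω ≥ 0 satisfies |a(x) − a(y)| ≤ ω for all x, y ∈ [0,1] with |x − y| ≤ r/n + 2·m(G_n). Then ‖S_n^{G_n}(a) ∘ T_n(f) − D_n^{G_n}(a) T_n(f)‖₂ ≤ r^{1/2} · M · n^{1/2} · ω. -/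
open Matrix

/-- Frobenius norm of a complex square matrix. -/
noncomputable def frob {n : ℕ} (X : Matrix (Fin n) (Fin n) ℂ) : ℝ :=
  Real.sqrt (∑ i, ∑ j, ‖X i j‖ ^ 2)

/-- Theorem 2.3 (quantitative form): if `f` is a trigonometric polynomial of degree `≤ r`
with coefficients bounded by `M`, `G_n = {x_{1,n},…,x_{n,n}} ⊂ [0,1]` a grid with
`m(G_n) = max_i |x_{i,n} − i/n|`, and `ω` bounds the oscillation of `a` over distances
`≤ r/n + 2 m(G_n)`, then
`‖S_n^{G_n}(a) ∘ T_n(f) − D_n^{G_n}(a) T_n(f)‖₂ ≤ √r · M · √n · ω`. -/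
theorem arrow_shaped_vs_diagonal_sampling_frobenius_bound
    (n r : ℕ) (hn : 1 ≤ n) (a : ℝ → ℂ) (fc : ℤ → ℂ) (M : ℝ)
    (hfc0 : ∀ k : ℤ, (r : ℤ) < |k| → fc k = 0)
    (hfcM : ∀ k : ℤ, ‖fc k‖ ≤ M)
    (x : Fin n → ℝ) (hx : ∀ i, x i ∈ Set.Icc (0 : ℝ) 1)
    (m : ℝ)
    (hm : IsGreatest (Set.range fun i : Fin n => |x i - (((i : ℕ) : ℝ) + 1) / n|) m)
    (ω : ℝ) (hω : 0 ≤ ω)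
    (ha : ∀ u ∈ Set.Icc (0 : ℝ) 1, ∀ v ∈ Set.Icc (0 : ℝ) 1,
      |u - v| ≤ (r : ℝ) / n + 2 * m → ‖a u - a v‖ ≤ ω) :
    frob ((Matrix.of fun i j : Fin n => a (x (min i j)) * fc ((i : ℤ) - (j : ℤ))) -
        (Matrix.diagonal fun i : Fin n => a (x i)) *
          (Matrix.of fun i j : Fin n => fc ((i : ℤ) - (j : ℤ)))) ≤
      Real.sqrt r * M * Real.sqrt n * ω := by
  have hM : 0 ≤ M := le_trans (norm_nonneg _) (hfcM 0)
  have hnpos : (0:ℝ) < n := by exact_mod_cast hn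
  have hmax : ∀ i : Fin n, |x i - (((i : ℕ) : ℝ) + 1) / n| ≤ m := fun i => hm.2 ⟨i, rfl⟩
  set C : ℝ := (M * ω) ^ 2 with hC
  have hC0 : 0 ≤ C := sq_nonneg _
  -- entry formula
  have hentry : ∀ i j : Fin n,
      ((Matrix.of fun i j : Fin n => a (x (min i j)) * fc ((i : ℤ) - (j : ℤ))) -
        (Matrix.diagonal fun i : Fin n => a (x i)) *
          (Matrix.of fun i j : Fin n => fc ((i : ℤ) - (j : ℤ)))) i j
      = (a (x (min i j)) - a (x i)) * fc ((i : ℤ) - (j : ℤ)) := by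
    intro i j
    simp [Matrix.sub_apply, Matrix.diagonal_mul, sub_mul]
  -- pointwise bound
  have key : ∀ i j : Fin n,
      ‖((Matrix.of fun i j : Fin n => a (x (min i j)) * fc ((i : ℤ) - (j : ℤ))) -
        (Matrix.diagonal fun i : Fin n => a (x i)) *
          (Matrix.of fun i j : Fin n => fc ((i : ℤ) - (j : ℤ)))) i j‖ ^ 2
      ≤ if (j < i ∧ (i : ℕ) - (j : ℕ) ≤ r) then C else 0 := by
    intro i j
    rw [hentry]
    by_cases hji : j < i
    · by_cases hd : (i : ℕ) - (j : ℕ) ≤ r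
      · rw [if_pos ⟨hji, hd⟩]
        have hji' : (j : ℕ) < (i : ℕ) := hji
        have hmin : min i j = j := min_eq_right hji.le
        rw [hmin]
        have hdist : |x j - x i| ≤ (r : ℝ) / n + 2 * m := by
          have h1 : |x j - x i| ≤ |x j - (((j : ℕ) : ℝ) + 1) / n| +
              |(((j : ℕ) : ℝ) + 1) / n - (((i : ℕ) : ℝ) + 1) / n| +
              |(((i : ℕ) : ℝ) + 1) / n - x i| := by
            have := abs_sub_le (x j) ((((j : ℕ) : ℝ) + 1) / n) (x i)
            have := abs_sub_le ((((j : ℕ) : ℝ) + 1) / n) ((((i : ℕ) : ℝ) + 1) / n) (x i)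
            linarith [abs_sub_le (x j) ((((j : ℕ) : ℝ) + 1) / n) (x i),
              abs_sub_le ((((j : ℕ) : ℝ) + 1) / n) ((((i : ℕ) : ℝ) + 1) / n) (x i)]
          have hij : ((i : ℕ) : ℝ) - ((j : ℕ) : ℝ) ≤ (r : ℝ) := by
            have : (i : ℕ) ≤ r + (j : ℕ) := by omega
            have := (Nat.cast_le (α := ℝ)).mpr this
            push_cast at this ⊢
            linarith
          have hAB : |(((j : ℕ) : ℝ) + 1) / n - (((i : ℕ) : ℝ) + 1) / n| ≤ (r : ℝ) / n := by
            have heq : (((j : ℕ) : ℝ) + 1) / n - (((i : ℕ) : ℝ) + 1) / n =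
                -((((i : ℕ) : ℝ) - ((j : ℕ) : ℝ)) / n) := by ring
            rw [heq, abs_neg, abs_of_nonneg]
            · gcongr
            · apply div_nonneg _ hnpos.le
              have : ((j : ℕ) : ℝ) ≤ ((i : ℕ) : ℝ) := by exact_mod_cast hji'.le
              linarith
          have hjm := hmax j
          have him := abs_sub_comm (x i) ((((i : ℕ) : ℝ) + 1) / n) ▸ hmax i
          have him' : |(((i : ℕ) : ℝ) + 1) / n - x i| ≤ m := by
            rw [abs_sub_comm]; exact hmax i
          linarith
        have hosc : ‖a (x j) - a (x i)‖ ≤ ω := ha _ (hx j) _ (hx i) hdist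
        have hfcb : ‖fc ((i : ℤ) - (j : ℤ))‖ ≤ M := hfcM _
        rw [norm_mul]
        have : ‖a (x j) - a (x i)‖ * ‖fc ((i : ℤ) - (j : ℤ))‖ ≤ ω * M :=
          mul_le_mul hosc hfcb (norm_nonneg _) hω
        calc (‖a (x j) - a (x i)‖ * ‖fc ((i : ℤ) - (j : ℤ))‖) ^ 2
            ≤ (ω * M) ^ 2 := by
              apply pow_le_pow_left₀ (by positivity) this
          _ = C := by rw [hC]; ring
      · rw [if_neg (by tauto)]
        have : fc ((i : ℤ) - (j : ℤ)) = 0 := by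
          apply hfc0
          have hji' : (j : ℕ) ≤ (i : ℕ) := le_of_lt hji
          have hji'' : ((j : ℕ) : ℤ) ≤ ((i : ℕ) : ℤ) := by exact_mod_cast hji'
          rw [show ((i : ℤ) - (j : ℤ)) = (((i : ℕ) : ℤ) - ((j : ℕ) : ℤ)) from rfl,
            abs_of_nonneg (by omega)]
          omega
        simp [this]
    · rw [if_neg (by tauto)]
      have hmin : min i j = i := min_eq_left (le_of_not_gt hji)
      simp [hmin]
  -- row sum bound
  have rowbound : ∀ i : Fin n,
      (∑ j : Fin n, if (j < i ∧ (i : ℕ) - (j : ℕ) ≤ r) then C else 0) ≤ (r : ℝ) * C := by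
    intro i
    classical
    rw [← Finset.sum_filter]
    rw [Finset.sum_const, nsmul_eq_mul]
    apply mul_le_mul_of_nonneg_right _ hC0
    have hcard : (Finset.univ.filter fun j : Fin n =>
        (j < i ∧ (i : ℕ) - (j : ℕ) ≤ r)).card ≤ r := by
      have hinj : ∀ j ∈ (Finset.univ.filter fun j : Fin n =>
          (j < i ∧ (i : ℕ) - (j : ℕ) ≤ r)), (j : ℕ) ∈ Finset.Ico ((i : ℕ) - r) (i : ℕ) := by
        intro j hj
        simp only [Finset.mem_filter, Finset.mem_univ, true_and] at hj
        have : (j : ℕ) < (i : ℕ) := hj.1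
        simp only [Finset.mem_Ico]
        omega
      have := Finset.card_le_card_of_injOn (f := fun j : Fin n => (j : ℕ)) hinj
        (fun p _ q _ h => Fin.ext h)
      rw [Nat.card_Ico] at this
      omega
    exact_mod_cast hcard
  -- total sum bound
  have total : (∑ i : Fin n, ∑ j : Fin n,
      ‖((Matrix.of fun i j : Fin n => a (x (min i j)) * fc ((i : ℤ) - (j : ℤ))) -
        (Matrix.diagonal fun i : Fin n => a (x i)) *
          (Matrix.of fun i j : Fin n => fc ((i : ℤ) - (j : ℤ)))) i j‖ ^ 2)
      ≤ (n : ℝ) * ((r : ℝ) * C) := by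
    calc (∑ i : Fin n, ∑ j : Fin n, _) ≤ ∑ i : Fin n, (r : ℝ) * C := by
          apply Finset.sum_le_sum
          intro i _
          exact le_trans (Finset.sum_le_sum fun j _ => key i j) (rowbound i)
      _ = (n : ℝ) * ((r : ℝ) * C) := by
          rw [Finset.sum_const, Finset.card_univ, Fintype.card_fin, nsmul_eq_mul]
  -- finish
  unfold frob
  calc Real.sqrt (∑ i, ∑ j, _) ≤ Real.sqrt ((n : ℝ) * ((r : ℝ) * C)) :=
        Real.sqrt_le_sqrt total
    _ = Real.sqrt r * M * Real.sqrt n * ω := by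
        rw [hC, Real.sqrt_mul (by positivity), Real.sqrt_mul (by positivity),
          Real.sqrt_sq (by positivity)]
        ring
end

section
/- Let a : [0,1] → ℂ be continuous, let f(θ) = ∑_{k=−r}^{r} f_k e^{ikθ} be a trigonometric polynomial of degree ≤ r, and for each n let G_n = {x_{1,n},…,x_{n,n}} ⊂ [0,1] be a grid such that m(G_n) = max_{1≤i≤n} |x_{i,n} − i/n| → 0 as n → ∞ (an asymptotically uniform family of grids). Then n^{−1/2} ‖S_n^{G_n}(a) ∘ T_n(f) − D_n^{G_n}(a) T_n(f)‖₂ → 0 as n → ∞. -/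
/-!
The difference `S_n(a) ∘ T_n(f) - D_n(a) T_n(f)` has entries `(a(x_j) - a(x_i)) f_{i-j}` for
`j < i ≤ j + r` and vanishes elsewhere, so each row has at most `r` nonzero entries. On such a
band, asymptotic uniformity of the grid makes `|x_i - x_j| ≤ 2 m(G_n) + r/n` small, and uniform
continuity of `a` on `[0,1]` makes every entry uniformly small. Hence the Frobenius norm is
`o(√n)`.
-/

open Matrix

open Filter Topology Finset

lemma frob_nonneg {n : ℕ} (X : Matrix (Fin n) (Fin n) ℂ) : 0 ≤ frob X := Real.sqrt_nonneg _

lemma norm_le_sum_norm_Icc_of_eq_zero {E : Type*} [SeminormedAddCommGroup E] {t : ℤ → E} {r : ℕ}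
    (ht : ∀ k : ℤ, (r : ℤ) < |k| → t k = 0) (k : ℤ) :
    ‖t k‖ ≤ ∑ l ∈ Icc (-(r : ℤ)) r, ‖t l‖ := by
  by_cases hk : k ∈ Icc (-(r : ℤ)) r
  · exact single_le_sum (fun _ _ => norm_nonneg _) hk
  · rw [ht k (by rw [mem_Icc] at hk; rw [lt_abs]; omega), norm_zero]
    exact sum_nonneg fun _ _ => norm_nonneg _

lemma card_filter_lt_and_le_add_le {n : ℕ} (r : ℕ) (i : Fin n) :
    #{j : Fin n | j < i ∧ (i : ℕ) ≤ j + r} ≤ r := by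
  calc #{j : Fin n | j < i ∧ (i : ℕ) ≤ j + r}
      ≤ #(Ico ((i : ℕ) - r) i) :=
        card_le_card_of_injOn (fun j => (j : ℕ))
          (fun j hj => by
            simp only [coe_filter, Set.mem_ofPred_eq, mem_univ, true_and, coe_Ico,
              Set.mem_Ico] at hj ⊢
            omega)
          Fin.val_injective.injOn
    _ ≤ r := by rw [Nat.card_Ico]; omega

lemma frob_div_sqrt_le_of_lower_band {n r : ℕ} {X : Matrix (Fin n) (Fin n) ℂ} {M : ℝ}
    (hM : 0 ≤ M) (hzero : ∀ i j : Fin n, ¬ (j < i ∧ (i : ℕ) ≤ j + r) → X i j = 0)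
    (hle : ∀ i j : Fin n, j < i → (i : ℕ) ≤ j + r → ‖X i j‖ ≤ M) :
    frob X / √n ≤ √r * M := by
  have hrow : ∀ i : Fin n, ∑ j, ‖X i j‖ ^ 2 ≤ r * M ^ 2 := by
    intro i
    calc ∑ j, ‖X i j‖ ^ 2 = ∑ j with j < i ∧ (i : ℕ) ≤ j + r, ‖X i j‖ ^ 2 := by
          refine (sum_filter_of_ne fun j _ h => ?_).symm
          by_contra hj
          exact h (by rw [hzero i j hj, norm_zero, sq, zero_mul])
      _ ≤ ∑ j with j < i ∧ (i : ℕ) ≤ j + r, M ^ 2 :=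
          sum_le_sum fun j hj => by
            rw [mem_filter] at hj
            exact pow_le_pow_left₀ (norm_nonneg _) (hle i j hj.2.1 hj.2.2) 2
      _ ≤ r * M ^ 2 := by
          rw [sum_const, nsmul_eq_mul]
          gcongr
          exact_mod_cast card_filter_lt_and_le_add_le r i
  have htotal : ∑ i, ∑ j, ‖X i j‖ ^ 2 ≤ n * (r * M ^ 2) := by
    simpa using sum_le_sum fun i (_ : i ∈ univ) => hrow i
  apply div_le_of_le_mul₀ (Real.sqrt_nonneg _) (by positivity)
  calc frob X ≤ √(n * (r * M ^ 2)) := Real.sqrt_le_sqrt htotal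
    _ = √r * M * √n := by
        rw [Real.sqrt_mul (Nat.cast_nonneg _), Real.sqrt_mul (Nat.cast_nonneg _),
          Real.sqrt_sq hM]
        ring

lemma frob_arrow_sub_diagonal_mul_div_sqrt_le {n r : ℕ} (s : Fin n → ℂ) (t : ℤ → ℂ)
    (ht : ∀ k : ℤ, (r : ℤ) < k → t k = 0) {C η : ℝ} (hC : ∀ k, ‖t k‖ ≤ C) (hη : 0 ≤ η)
    (hs : ∀ i j : Fin n, j < i → (i : ℕ) ≤ j + r → ‖s j - s i‖ ≤ η) :
    frob ((of fun i j : Fin n => s (min i j) * t ((i : ℤ) - (j : ℤ))) -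
        diagonal s * of fun i j : Fin n => t ((i : ℤ) - (j : ℤ))) / √n ≤ √r * (η * C) := by
  have hentry : ∀ i j, ((of fun i j : Fin n => s (min i j) * t ((i : ℤ) - (j : ℤ))) -
      diagonal s * of fun i j : Fin n => t ((i : ℤ) - (j : ℤ))) i j =
      (s (min i j) - s i) * t ((i : ℤ) - (j : ℤ)) := by
    intro i j
    simp [diagonal_mul, sub_mul]
  apply frob_div_sqrt_le_of_lower_band (mul_nonneg hη ((norm_nonneg _).trans (hC 0)))
  · intro i j hij
    rw [hentry]
    rcases le_or_gt i j with hle | hlt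
    · rw [min_eq_left hle, sub_self, zero_mul]
    · rw [ht _ (by rw [Fin.lt_def] at hlt; omega), mul_zero]
  · intro i j hji hij
    rw [hentry, min_eq_right hji.le, norm_mul]
    exact mul_le_mul (hs i j hji hij) (hC _) (norm_nonneg _) hη

lemma abs_sub_le_of_le_add {n r : ℕ} (y : Fin n → ℝ) {i j : Fin n} (hji : j ≤ i)
    (hij : (i : ℕ) ≤ j + r) :
    |y i - y j| ≤ 2 * (⨆ k : Fin n, |y k - (((k : ℕ) : ℝ) + 1) / n|) + r / n := by
  set d := ⨆ k : Fin n, |y k - (((k : ℕ) : ℝ) + 1) / n|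
  have hd : ∀ k, |y k - (((k : ℕ) : ℝ) + 1) / n| ≤ d := fun k =>
    le_ciSup (f := fun k : Fin n => |y k - (((k : ℕ) : ℝ) + 1) / n|)
      (Set.finite_range _).bddAbove k
  have hgap : 0 ≤ (((i : ℕ) : ℝ) - j) / n ∧ (((i : ℕ) : ℝ) - j) / n ≤ r / n := by
    have hji' : ((j : ℕ) : ℝ) ≤ i := by exact_mod_cast Fin.le_def.mp hji
    have hij' : ((i : ℕ) : ℝ) ≤ j + r := by exact_mod_cast hij
    exact ⟨div_nonneg (by linarith) (Nat.cast_nonneg _),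
      div_le_div_of_nonneg_right (by linarith) (Nat.cast_nonneg _)⟩
  have hsplit : y i - y j = (y i - (((i : ℕ) : ℝ) + 1) / n) - (y j - (((j : ℕ) : ℝ) + 1) / n)
      + (((i : ℕ) : ℝ) - j) / n := by ring
  obtain ⟨hi₁, hi₂⟩ := abs_le.mp (hd i)
  obtain ⟨hj₁, hj₂⟩ := abs_le.mp (hd j)
  rw [hsplit, abs_le]
  constructor <;> linarith [hgap.1, hgap.2]

lemma eventually_forall_abs_sub_lt (x : (n : ℕ) → Fin n → ℝ) (r : ℕ)
    (hm : Tendsto (fun n : ℕ => ⨆ i : Fin n, |x n i - (((i : ℕ) : ℝ) + 1) / n|) atTop (𝓝 0))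
    {δ : ℝ} (hδ : 0 < δ) :
    ∀ᶠ n in atTop, ∀ i j : Fin n, j ≤ i → (i : ℕ) ≤ j + r → |x n i - x n j| < δ := by
  have hbound : Tendsto (fun n : ℕ => 2 * (⨆ i : Fin n, |x n i - (((i : ℕ) : ℝ) + 1) / n|)
      + r / n) atTop (𝓝 0) := by
    simpa using (hm.const_mul 2).add (tendsto_const_div_atTop_nhds_zero_nat (r : ℝ))
  filter_upwards [hbound.eventually (gt_mem_nhds hδ)] with n hn i j hji hij
  exact (abs_sub_le_of_le_add (x n) hji hij).trans_lt hn

/-- Theorem 2.3 (asymptotic form): if `a : [0,1] → ℂ` is continuous, `f` is a trigonometric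
polynomial of degree `≤ r`, and the grids `G_n` are asymptotically uniform, i.e.
`m(G_n) = max_i |x_{i,n} − i/n| → 0`, then
`n^{−1/2} ‖S_n^{G_n}(a) ∘ T_n(f) − D_n^{G_n}(a) T_n(f)‖₂ → 0` as `n → ∞`. -/
theorem arrow_shaped_vs_diagonal_sampling_asymptotic
    (r : ℕ) (a : ℝ → ℂ) (ha : ContinuousOn a (Set.Icc 0 1))
    (fc : ℤ → ℂ) (hfc0 : ∀ k : ℤ, (r : ℤ) < |k| → fc k = 0)
    (x : (n : ℕ) → Fin n → ℝ) (hx : ∀ n i, x n i ∈ Set.Icc (0 : ℝ) 1)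
    (hm : Filter.Tendsto (fun n : ℕ => ⨆ i : Fin n, |x n i - (((i : ℕ) : ℝ) + 1) / n|)
      Filter.atTop (nhds 0)) :
    Filter.Tendsto
      (fun n : ℕ =>
        frob ((Matrix.of fun i j : Fin n => a (x n (min i j)) * fc ((i : ℤ) - (j : ℤ))) -
            (Matrix.diagonal fun i : Fin n => a (x n i)) *
              (Matrix.of fun i j : Fin n => fc ((i : ℤ) - (j : ℤ)))) / Real.sqrt n)
      Filter.atTop (nhds 0) := by
  rw [Metric.tendsto_nhds]
  intro ε hε
  set C := ∑ k ∈ Icc (-(r : ℤ)) r, ‖fc k‖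
  have hC : ∀ k, ‖fc k‖ ≤ C := norm_le_sum_norm_Icc_of_eq_zero hfc0
  have hK : 0 ≤ √r * C := mul_nonneg (Real.sqrt_nonneg _) ((norm_nonneg _).trans (hC 0))
  set η := ε / (√r * C + 1)
  have hη : 0 < η := by positivity
  obtain ⟨δ, hδ, hud⟩ := Metric.uniformContinuousOn_iff.mp
    (isCompact_Icc.uniformContinuousOn_of_continuous ha) η hη
  filter_upwards [eventually_forall_abs_sub_lt x r hm hδ] with n hn
  have hbound := frob_arrow_sub_diagonal_mul_div_sqrt_le (fun i => a (x n i)) fc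
    (fun k hk => hfc0 k (hk.trans_le (le_abs_self k))) hC hη.le fun i j hji hij => by
      rw [← dist_eq_norm]
      refine (hud _ (hx n j) _ (hx n i) ?_).le
      rw [Real.dist_eq, abs_sub_comm]
      exact hn i j hji.le hij
  rw [Real.dist_eq, sub_zero, abs_of_nonneg (div_nonneg (frob_nonneg _) (Real.sqrt_nonneg _))]
  refine hbound.trans_lt ?_
  rw [show √r * (η * C) = ε * (√r * C) / (√r * C + 1) by ring, div_lt_iff₀ (by positivity)]
  nlinarith
end

section
/- Let n ≥ 5, h = 1/(n+1), x_j = j·h, a : [0,1] → ℝ bounded with |a(x)| ≤ A for all x, and write a_j = a(x_j). Let K_n be the n×n matrix with first row entries (K_n)_{11} = 2a_1, (K_n)_{12} = −a_1; last row entries (K_n)_{n,n−1} = −a_n, (K_n)_{nn} = 2a_n; and for 2 ≤ j ≤ n−1, (K_n)_{j,j−2} = a_j/12, (K_n)_{j,j−1} = −16a_j/12, (K_n)_{jj} = 30a_j/12, (K_n)_{j,j+1} = −16a_j/12, (K_n)_{j,j+2} = a_j/12 (entries with indices outside 1,…,n omitted), all other entries zero. Let K̃_n be the symmetric matrix with entries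 (K̃_n)_{ij} = a_{min(i,j)}·p_{i−j}, where p_0 = 30/12, p_{±1} = −16/12, p_{±2} = 1/12 and p_k = 0 for |k| > 2. Suppose ω ≥ 0 satisfies |a(x) − a(y)| ≤ ω for all x, y ∈ [0,1] with |x − y| ≤ 2h. Then ‖K_n − K̃_n‖₂ ≤ 7^{1/2}·A + 257^{1/2}·n^{1/2}·ω. -/
open Matrix

/-- Frobenius norm of a real square matrix. -/
noncomputable def frobR {n : ℕ} (X : Matrix (Fin n) (Fin n) ℝ) : ℝ :=
  Real.sqrt (∑ i, ∑ j, (X i j) ^ 2)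

lemma mySqrtAdd (x y : ℝ) (hx : 0 ≤ x) (hy : 0 ≤ y) :
    Real.sqrt (x + y) ≤ Real.sqrt x + Real.sqrt y := by
  have h1 : x + y ≤ (Real.sqrt x + Real.sqrt y) ^ 2 := by
    have : (Real.sqrt x + Real.sqrt y) ^ 2
        = x + y + 2 * (Real.sqrt x * Real.sqrt y) := by
      rw [add_sq, Real.sq_sqrt hx, Real.sq_sqrt hy]; ring
    nlinarith [Real.sqrt_nonneg x, Real.sqrt_nonneg y]
  calc Real.sqrt (x + y) ≤ Real.sqrt ((Real.sqrt x + Real.sqrt y) ^ 2) :=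
        Real.sqrt_le_sqrt h1
    _ = Real.sqrt x + Real.sqrt y := Real.sqrt_sq (by positivity)

lemma myOnePt {n : ℕ} (f : Fin n → ℝ) (j0 : Fin n) {c0 : ℝ}
    (hz : ∀ j, j ≠ j0 → f j = 0) (hb0 : f j0 ≤ c0) : ∑ j, f j ≤ c0 := by
  have : ∑ j, f j = ∑ j ∈ ({j0} : Finset (Fin n)), f j := by
    refine (Finset.sum_subset (Finset.subset_univ _) ?_).symm
    intro j _ hj
    simp only [Finset.mem_singleton] at hj
    exact hz j hj
  rw [this, Finset.sum_singleton]; exact hb0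

lemma myTwoPt {n : ℕ} (f : Fin n → ℝ) (j0 j1 : Fin n) {c0 c1 : ℝ}
    (h01 : j0 ≠ j1)
    (hz : ∀ j, j ≠ j0 → j ≠ j1 → f j = 0)
    (hb0 : f j0 ≤ c0) (hb1 : f j1 ≤ c1) : ∑ j, f j ≤ c0 + c1 := by
  have : ∑ j, f j = ∑ j ∈ ({j0, j1} : Finset (Fin n)), f j := by
    refine (Finset.sum_subset (Finset.subset_univ _) ?_).symm
    intro j _ hj
    simp only [Finset.mem_insert, Finset.mem_singleton, not_or] at hj
    exact hz j hj.1 hj.2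
  rw [this, Finset.sum_insert (by simp [h01]), Finset.sum_singleton]
  exact add_le_add hb0 hb1

lemma myThreePt {n : ℕ} (f : Fin n → ℝ) (j0 j1 j2 : Fin n) {c0 c1 c2 : ℝ}
    (h01 : j0 ≠ j1) (h02 : j0 ≠ j2) (h12 : j1 ≠ j2)
    (hz : ∀ j, j ≠ j0 → j ≠ j1 → j ≠ j2 → f j = 0)
    (hb0 : f j0 ≤ c0) (hb1 : f j1 ≤ c1) (hb2 : f j2 ≤ c2) :
    ∑ j, f j ≤ c0 + c1 + c2 := by
  have : ∑ j, f j = ∑ j ∈ ({j0, j1, j2} : Finset (Fin n)), f j := by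
    refine (Finset.sum_subset (Finset.subset_univ _) ?_).symm
    intro j _ hj
    simp only [Finset.mem_insert, Finset.mem_singleton, not_or] at hj
    exact hz j hj.1 hj.2.1 hj.2.2
  rw [this, Finset.sum_insert (by simp [h01, h02]),
    Finset.sum_insert (by simp [h12]), Finset.sum_singleton]
  linarith

set_option maxHeartbeats 1600000

/-- With `K_n` the diffusion matrix of the fourth-order central FD scheme
`(1,−16,30,−16,1)/12` (with the `(−1,2,−1)` scheme in the first and last rows) and
`K̃_n = S_n(a) ∘ T_n(p)` its symmetric arrow-shaped approximation, if `|a| ≤ A` on `[0,1]`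
and the oscillation of `a` over distances `≤ 2h` is at most `ω`, then
`‖K_n − K̃_n‖₂ ≤ √7 · A + √257 · √n · ω`. -/
theorem fourth_order_diffusion_matrix_symmetrization_bound
    (n : ℕ) (hn : 5 ≤ n) (a : ℝ → ℝ) (A ω : ℝ)
    (hA : ∀ x ∈ Set.Icc (0 : ℝ) 1, |a x| ≤ A) (hω : 0 ≤ ω)
    (ha : ∀ x ∈ Set.Icc (0 : ℝ) 1, ∀ y ∈ Set.Icc (0 : ℝ) 1,
      |x - y| ≤ 2 / ((n : ℝ) + 1) → |a x - a y| ≤ ω) :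
    let h : ℝ := 1 / ((n : ℝ) + 1)
    let aa : ℕ → ℝ := fun j => a ((j : ℝ) * h)
    let p : ℤ → ℝ := fun k =>
      if k = 0 then 30 / 12
      else if k = 1 ∨ k = -1 then -16 / 12
      else if k = 2 ∨ k = -2 then 1 / 12
      else 0
    let K : Matrix (Fin n) (Fin n) ℝ := Matrix.of fun i j =>
      if (i : ℕ) = 0 then
        (if (j : ℕ) = 0 then 2 * aa 1 else if (j : ℕ) = 1 then -aa 1 else 0)
      else if (i : ℕ) = n - 1 then
        (if (j : ℕ) = n - 1 then 2 * aa n else if (j : ℕ) = n - 2 then -aa n else 0)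
      else aa ((i : ℕ) + 1) * p ((i : ℤ) - (j : ℤ))
    let Kt : Matrix (Fin n) (Fin n) ℝ := Matrix.of fun i j =>
      aa (min (i : ℕ) (j : ℕ) + 1) * p ((i : ℤ) - (j : ℤ))
    frobR (K - Kt) ≤ Real.sqrt 7 * A + Real.sqrt 257 * Real.sqrt n * ω := by
  intro h aa p K Kt
  have hpos : (0 : ℝ) < (n : ℝ) + 1 := by positivity
  have hh : h = 1 / ((n : ℝ) + 1) := rfl
  have hhpos : (0 : ℝ) < h := by rw [hh]; positivity
  have hA0 : 0 ≤ A := le_trans (abs_nonneg _) (hA 0 (by norm_num))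
  have hmem : ∀ j : ℕ, j ≤ n → ((j : ℝ) * h) ∈ Set.Icc (0 : ℝ) 1 := by
    intro j hj
    constructor
    · positivity
    · rw [hh, mul_one_div, div_le_one hpos]
      exact_mod_cast Nat.le_succ_of_le hj
  have haaA : ∀ j : ℕ, j ≤ n → |aa j| ≤ A := fun j hj => hA _ (hmem j hj)
  have haaω : ∀ j k : ℕ, j ≤ n → k ≤ n → j ≤ k + 2 → k ≤ j + 2 →
      |aa j - aa k| ≤ ω := by
    intro j k hj hk hjk hkj
    refine ha _ (hmem j hj) _ (hmem k hk) ?_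
    have h1 : (j : ℝ) * h - (k : ℝ) * h = ((j : ℝ) - k) * h := by ring
    rw [h1, abs_mul, abs_of_pos hhpos]
    have h2 : |(j : ℝ) - (k : ℝ)| ≤ 2 := by
      have hjk' : (j : ℝ) ≤ (k : ℝ) + 2 := by exact_mod_cast hjk
      have hkj' : (k : ℝ) ≤ (j : ℝ) + 2 := by exact_mod_cast hkj
      rw [abs_le]; constructor <;> linarith
    calc |(j : ℝ) - k| * h ≤ 2 * h := by nlinarith
      _ = 2 / ((n : ℝ) + 1) := by rw [hh]; ring
  -- per-row bounds
  set i0 : Fin n := ⟨0, by omega⟩ with hi0def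
  set iN : Fin n := ⟨n - 1, by omega⟩ with hiNdef
  have hi0N : i0 ≠ iN := by simp [hi0def, hiNdef, Fin.ext_iff]; omega
  have hrow : ∀ i : Fin n, (∑ j, ((K - Kt) i j) ^ 2) ≤
      (if i = i0 then 53 / 144 * A ^ 2 else 0)
        + (if i = iN then 821 / 144 * A ^ 2 else 0) + 257 / 144 * ω ^ 2 := by
    intro i
    have hωsq : (0 : ℝ) ≤ ω ^ 2 := sq_nonneg ω
    have hAsq : (0 : ℝ) ≤ A ^ 2 := sq_nonneg A
    by_cases h0 : i = i0
    · -- first row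
      rw [if_pos h0, if_neg (h0 ▸ hi0N), h0]
      have hiv : (i0 : ℕ) = 0 := rfl
      have e00 : ∀ j : Fin n, (j : ℕ) = 0 → (K - Kt) i0 j = -(aa 1) / 2 := by
        intro j hj
        simp only [Matrix.sub_apply, Matrix.of_apply, K, Kt, p, hiv, hj]
        norm_num
        try ring
      have e01 : ∀ j : Fin n, (j : ℕ) = 1 → (K - Kt) i0 j = aa 1 / 3 := by
        intro j hj
        simp only [Matrix.sub_apply, Matrix.of_apply, K, Kt, p, hiv, hj]
        norm_num
        try ring
      have e02 : ∀ j : Fin n, (j : ℕ) = 2 → (K - Kt) i0 j = -(aa 1) / 12 := by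
        intro j hj
        simp only [Matrix.sub_apply, Matrix.of_apply, K, Kt, p, hiv, hj]
        norm_num
        try ring
      have e0z : ∀ j : Fin n, (j : ℕ) ≠ 0 → (j : ℕ) ≠ 1 → (j : ℕ) ≠ 2 →
          (K - Kt) i0 j = 0 := by
        intro j hj0 hj1 hj2
        simp only [Matrix.sub_apply, Matrix.of_apply, K, Kt, p, hiv]
        split_ifs <;> first | ring1 | (exfalso; omega)
      have hb1 := abs_le.mp (haaA 1 (by omega))
      have hbound :
          (∑ j, ((K - Kt) i0 j) ^ 2) ≤ A ^ 2 / 4 + A ^ 2 / 9 + A ^ 2 / 144 := by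
        apply myThreePt (fun j => ((K - Kt) i0 j) ^ 2)
          ⟨0, by omega⟩ ⟨1, by omega⟩ ⟨2, by omega⟩
          (by simp [Fin.ext_iff]) (by simp [Fin.ext_iff]) (by simp [Fin.ext_iff])
        · intro j hj0 hj1 hj2
          simp only [Fin.ne_iff_vne] at hj0 hj1 hj2
          rw [e0z j hj0 hj1 hj2]; norm_num
        · rw [e00 _ rfl]
          calc (-(aa 1) / 2) ^ 2 = (aa 1) ^ 2 / 4 := by ring
            _ ≤ A ^ 2 / 4 := by nlinarith
        · rw [e01 _ rfl]
          calc (aa 1 / 3) ^ 2 = (aa 1) ^ 2 / 9 := by ring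
            _ ≤ A ^ 2 / 9 := by nlinarith
        · rw [e02 _ rfl]
          calc (-(aa 1) / 12) ^ 2 = (aa 1) ^ 2 / 144 := by ring
            _ ≤ A ^ 2 / 144 := by nlinarith
      calc (∑ j, ((K - Kt) i0 j) ^ 2) ≤ A ^ 2 / 4 + A ^ 2 / 9 + A ^ 2 / 144 := hbound
        _ ≤ 53 / 144 * A ^ 2 + 0 + 257 / 144 * ω ^ 2 := by linarith
    · by_cases hN : i = iN
      · -- last row
        rw [if_neg h0, if_pos hN, hN]
        have hiv : (iN : ℕ) = n - 1 := rfl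
        have en1 : ∀ j : Fin n, (j : ℕ) = n - 1 → (K - Kt) iN j = -(aa n) / 2 := by
          intro j hj
          simp only [Matrix.sub_apply, Matrix.of_apply, K, Kt, p, hiv, hj]
          rw [min_self, (show n - 1 + 1 = n by omega)]
          split_ifs <;> first | ring1 | (exfalso; omega)
        have en2 : ∀ j : Fin n, (j : ℕ) = n - 2 →
            (K - Kt) iN j = 4 / 3 * aa (n - 1) - aa n := by
          intro j hj
          simp only [Matrix.sub_apply, Matrix.of_apply, K, Kt, p, hiv, hj]
          rw [min_eq_right (by omega : n - 2 ≤ n - 1), (show n - 2 + 1 = n - 1 by omega)]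
          split_ifs <;> first | ring1 | (exfalso; omega)
        have en3 : ∀ j : Fin n, (j : ℕ) = n - 3 →
            (K - Kt) iN j = -(aa (n - 2)) / 12 := by
          intro j hj
          simp only [Matrix.sub_apply, Matrix.of_apply, K, Kt, p, hiv, hj]
          rw [min_eq_right (by omega : n - 3 ≤ n - 1), (show n - 3 + 1 = n - 2 by omega)]
          split_ifs <;> first | ring1 | (exfalso; omega)
        have enz : ∀ j : Fin n, (j : ℕ) ≠ n - 1 → (j : ℕ) ≠ n - 2 → (j : ℕ) ≠ n - 3 →
            (K - Kt) iN j = 0 := by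
          intro j hj0 hj1 hj2
          have hlt := j.isLt
          simp only [Matrix.sub_apply, Matrix.of_apply, K, Kt, p, hiv]
          split_ifs <;> first | ring1 | (exfalso; omega)
        have hb1 := abs_le.mp (haaA n (by omega))
        have hb2 := abs_le.mp (haaA (n - 1) (by omega))
        have hb3 := abs_le.mp (haaA (n - 2) (by omega))
        have hbound : (∑ j, ((K - Kt) iN j) ^ 2)
            ≤ A ^ 2 / 4 + 49 / 9 * A ^ 2 + A ^ 2 / 144 := by
          apply myThreePt (fun j => ((K - Kt) iN j) ^ 2)
            ⟨n - 1, by omega⟩ ⟨n - 2, by omega⟩ ⟨n - 3, by omega⟩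
            (by rw [Fin.ne_iff_vne]; exact (by omega : n - 1 ≠ n - 2))
            (by rw [Fin.ne_iff_vne]; exact (by omega : n - 1 ≠ n - 3))
            (by rw [Fin.ne_iff_vne]; exact (by omega : n - 2 ≠ n - 3))
          · intro j hj0 hj1 hj2
            simp only [Fin.ne_iff_vne] at hj0 hj1 hj2
            rw [enz j hj0 hj1 hj2]; norm_num
          · rw [en1 _ rfl]
            calc (-(aa n) / 2) ^ 2 = (aa n) ^ 2 / 4 := by ring
              _ ≤ A ^ 2 / 4 := by nlinarith
          · rw [en2 _ rfl]
            calc (4 / 3 * aa (n - 1) - aa n) ^ 2 ≤ (7 / 3 * A) ^ 2 :=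
                  sq_le_sq' (by linarith) (by linarith)
              _ = 49 / 9 * A ^ 2 := by ring
          · rw [en3 _ rfl]
            calc (-(aa (n - 2)) / 12) ^ 2 = (aa (n - 2)) ^ 2 / 144 := by ring
              _ ≤ A ^ 2 / 144 := by nlinarith
        calc (∑ j, ((K - Kt) iN j) ^ 2)
            ≤ A ^ 2 / 4 + 49 / 9 * A ^ 2 + A ^ 2 / 144 := hbound
          _ ≤ 0 + 821 / 144 * A ^ 2 + 257 / 144 * ω ^ 2 := by linarith
      · -- interior row
        rw [if_neg h0, if_neg hN]
        have hv0 : (i : ℕ) ≠ 0 := by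
          intro c; exact h0 (Fin.ext (by rw [c]))
        have hvN : (i : ℕ) ≠ n - 1 := by
          intro c; exact hN (Fin.ext (by rw [c]))
        have hlt := i.isLt
        have ej0 : ∀ j : Fin n, (j : ℕ) + 1 = (i : ℕ) →
            (K - Kt) i j = -(4 / 3) * (aa ((i : ℕ) + 1) - aa (i : ℕ)) := by
          intro j hj
          simp only [Matrix.sub_apply, Matrix.of_apply, K, Kt, p]
          rw [min_eq_right (by omega : (j : ℕ) ≤ (i : ℕ)), hj]
          split_ifs <;> first | ring1 | (exfalso; omega)
        have ej1 : ∀ j : Fin n, (j : ℕ) + 2 = (i : ℕ) →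
            (K - Kt) i j = 1 / 12 * (aa ((i : ℕ) + 1) - aa ((i : ℕ) - 1)) := by
          intro j hj
          simp only [Matrix.sub_apply, Matrix.of_apply, K, Kt, p]
          rw [min_eq_right (by omega : (j : ℕ) ≤ (i : ℕ)),
            (show (j : ℕ) + 1 = (i : ℕ) - 1 by omega)]
          split_ifs <;> first | ring1 | (exfalso; omega)
        have ejz : ∀ j : Fin n, (j : ℕ) + 1 ≠ (i : ℕ) → (j : ℕ) + 2 ≠ (i : ℕ) →
            (K - Kt) i j = 0 := by
          intro j hj0 hj1
          simp only [Matrix.sub_apply, Matrix.of_apply, K, Kt, p]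
          rcases le_or_gt (i : ℕ) (j : ℕ) with hle | hgt
          · rw [min_eq_left hle]
            split_ifs <;> first | ring1 | (exfalso; omega)
          · rw [min_eq_right (le_of_lt hgt)]
            split_ifs <;> first | ring1 | (exfalso; omega)
        have hw1 := abs_le.mp (haaω ((i : ℕ) + 1) (i : ℕ) (by omega) (by omega)
          (by omega) (by omega))
        have hw2 := abs_le.mp (haaω ((i : ℕ) + 1) ((i : ℕ) - 1) (by omega) (by omega)
          (by omega) (by omega))
        by_cases h1 : (i : ℕ) = 1
        · -- only one nonzero entry
          have hbound : (∑ j, ((K - Kt) i j) ^ 2) ≤ 16 / 9 * ω ^ 2 := by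
            apply myOnePt (fun j => ((K - Kt) i j) ^ 2) ⟨0, by omega⟩
            · intro j hj
              have hj' : (j : ℕ) ≠ 0 := by simpa [Fin.ne_iff_vne] using hj
              rw [ejz j (by omega) (by omega)]; norm_num
            · rw [ej0 ⟨0, by omega⟩ (show (0 : ℕ) + 1 = (i : ℕ) by omega)]
              calc (-(4 / 3) * (aa ((i : ℕ) + 1) - aa (i : ℕ))) ^ 2
                  ≤ (4 / 3 * ω) ^ 2 := sq_le_sq' (by linarith) (by linarith)
                _ = 16 / 9 * ω ^ 2 := by ring
          calc (∑ j, ((K - Kt) i j) ^ 2) ≤ 16 / 9 * ω ^ 2 := hbound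
            _ ≤ 0 + 0 + 257 / 144 * ω ^ 2 := by nlinarith
        · -- two nonzero entries
          have hige : 2 ≤ (i : ℕ) := by omega
          have hbound : (∑ j, ((K - Kt) i j) ^ 2)
              ≤ 16 / 9 * ω ^ 2 + 1 / 144 * ω ^ 2 := by
            apply myTwoPt (fun j => ((K - Kt) i j) ^ 2)
              ⟨(i : ℕ) - 1, by omega⟩ ⟨(i : ℕ) - 2, by omega⟩
              (by rw [Fin.ne_iff_vne]; exact (by omega : (i : ℕ) - 1 ≠ (i : ℕ) - 2))
            · intro j hj0 hj1
              have hj0' : (j : ℕ) ≠ (i : ℕ) - 1 := by simpa [Fin.ne_iff_vne] using hj0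
              have hj1' : (j : ℕ) ≠ (i : ℕ) - 2 := by simpa [Fin.ne_iff_vne] using hj1
              rw [ejz j (by omega) (by omega)]; norm_num
            · rw [ej0 ⟨(i : ℕ) - 1, by omega⟩ (show (i : ℕ) - 1 + 1 = (i : ℕ) by omega)]
              calc (-(4 / 3) * (aa ((i : ℕ) + 1) - aa (i : ℕ))) ^ 2
                  ≤ (4 / 3 * ω) ^ 2 := sq_le_sq' (by linarith) (by linarith)
                _ = 16 / 9 * ω ^ 2 := by ring
            · rw [ej1 ⟨(i : ℕ) - 2, by omega⟩ (show (i : ℕ) - 2 + 2 = (i : ℕ) by omega)]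
              calc (1 / 12 * (aa ((i : ℕ) + 1) - aa ((i : ℕ) - 1))) ^ 2
                  ≤ (1 / 12 * ω) ^ 2 := sq_le_sq' (by linarith) (by linarith)
                _ = 1 / 144 * ω ^ 2 := by ring
          calc (∑ j, ((K - Kt) i j) ^ 2) ≤ 16 / 9 * ω ^ 2 + 1 / 144 * ω ^ 2 := hbound
            _ ≤ 0 + 0 + 257 / 144 * ω ^ 2 := by nlinarith
  -- sum over rows
  have key : (∑ i, ∑ j, ((K - Kt) i j) ^ 2)
      ≤ 7 * A ^ 2 + 257 * (n : ℝ) * ω ^ 2 := by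
    have hsum : (∑ i, ∑ j, ((K - Kt) i j) ^ 2)
        ≤ ∑ i : Fin n, ((if i = i0 then 53 / 144 * A ^ 2 else 0)
          + (if i = iN then 821 / 144 * A ^ 2 else 0) + 257 / 144 * ω ^ 2) :=
      Finset.sum_le_sum fun i _ => hrow i
    have heval : (∑ i : Fin n, ((if i = i0 then 53 / 144 * A ^ 2 else 0)
          + (if i = iN then 821 / 144 * A ^ 2 else 0) + 257 / 144 * ω ^ 2))
        = 53 / 144 * A ^ 2 + 821 / 144 * A ^ 2 + (n : ℝ) * (257 / 144 * ω ^ 2) := by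
      rw [Finset.sum_add_distrib, Finset.sum_add_distrib]
      rw [Finset.sum_ite_eq' Finset.univ i0 (fun _ => 53 / 144 * A ^ 2)]
      rw [Finset.sum_ite_eq' Finset.univ iN (fun _ => 821 / 144 * A ^ 2)]
      simp [Finset.card_univ, mul_comm]
    have hn5 : (5 : ℝ) ≤ (n : ℝ) := by exact_mod_cast hn
    have h1 : (0 : ℝ) ≤ (n : ℝ) * ω ^ 2 := by positivity
    have h2 : (0 : ℝ) ≤ A ^ 2 := sq_nonneg A
    calc (∑ i, ∑ j, ((K - Kt) i j) ^ 2)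
        ≤ 53 / 144 * A ^ 2 + 821 / 144 * A ^ 2 + (n : ℝ) * (257 / 144 * ω ^ 2) := by
          rw [← heval]; exact hsum
      _ ≤ 7 * A ^ 2 + 257 * (n : ℝ) * ω ^ 2 := by nlinarith
  -- conclude
  have hfr : frobR (K - Kt) ≤ Real.sqrt (7 * A ^ 2 + 257 * (n : ℝ) * ω ^ 2) := by
    unfold frobR
    exact Real.sqrt_le_sqrt key
  have hsplit : Real.sqrt (7 * A ^ 2 + 257 * (n : ℝ) * ω ^ 2)
      ≤ Real.sqrt (7 * A ^ 2) + Real.sqrt (257 * (n : ℝ) * ω ^ 2) :=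
    mySqrtAdd _ _ (by positivity) (by positivity)
  have h7 : Real.sqrt (7 * A ^ 2) = Real.sqrt 7 * A := by
    rw [Real.sqrt_mul (by norm_num) (A ^ 2), Real.sqrt_sq hA0]
  have h257 : Real.sqrt (257 * (n : ℝ) * ω ^ 2)
      = Real.sqrt 257 * Real.sqrt n * ω := by
    rw [Real.sqrt_mul (by positivity) (ω ^ 2), Real.sqrt_sq hω,
      Real.sqrt_mul (by norm_num) (n : ℝ)]
  linarith [hfr, hsplit, h7 ▸ le_refl (Real.sqrt (7 * A ^ 2)),
    h257 ▸ le_refl (Real.sqrt (257 * (n : ℝ) * ω ^ 2))]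
end

section
/- Let n ≥ 1, let φ_1,…,φ_n be the hat functions on [0,1], let b, c : [0,1] → ℝ be Lebesgue integrable, and define the n×n matrix Z_n by (Z_n)_{ij} = ∫₀¹ b(x) φ_j'(x) φ_i(x) dx + ∫₀¹ c(x) φ_j(x) φ_i(x) dx. Suppose W ≥ 0 satisfies ∫_E |b(x)| dx ≤ W for every measurable set E ⊆ [0,1] with Lebesgue measure ≤ 2/(n+1). Then: (i) (Z_n)_{ij} = 0 whenever |i − j| > 1; (ii) |(Z_n)_{ij}| ≤ (n+1)·W + ∫₀¹|c(x)| dx for all i, j; and hence (iii) ‖Z_n‖₂² ≤ 3n·[(n+1)·W + ∫₀¹|c(x)| dx]². -/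
open MeasureTheory intervalIntegral

/-- The hat function `φ_i` on `[0,1]` for the uniform grid `x_i = i/(n+1)`. -/
noncomputable def hat (n i : ℕ) (x : ℝ) : ℝ :=
  if x ∈ Set.Ico (((i : ℝ) - 1) * (1 / ((n : ℝ) + 1))) ((i : ℝ) * (1 / ((n : ℝ) + 1))) then
    (x - ((i : ℝ) - 1) * (1 / ((n : ℝ) + 1))) / (1 / ((n : ℝ) + 1))
  else if x ∈ Set.Ico ((i : ℝ) * (1 / ((n : ℝ) + 1))) (((i : ℝ) + 1) * (1 / ((n : ℝ) + 1))) then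
    (((i : ℝ) + 1) * (1 / ((n : ℝ) + 1)) - x) / (1 / ((n : ℝ) + 1))
  else 0

/-- The (weak) derivative of the hat function `φ_i`. -/
noncomputable def hatDeriv (n i : ℕ) (x : ℝ) : ℝ :=
  if x ∈ Set.Ioo (((i : ℝ) - 1) * (1 / ((n : ℝ) + 1))) ((i : ℝ) * (1 / ((n : ℝ) + 1))) then
    (n : ℝ) + 1
  else if x ∈ Set.Ioo ((i : ℝ) * (1 / ((n : ℝ) + 1))) (((i : ℝ) + 1) * (1 / ((n : ℝ) + 1))) then
    -((n : ℝ) + 1)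
  else 0

/-! `φ_i` and `φ_i'` vanish off `[x_{i-1}, x_{i+1})`, an interval of length `2/(n+1)` that meets
`[x_{j-1}, x_{j+1})` only when `|i - j| ≤ 1`; hence `Z_n` is tridiagonal. On that interval
`|φ_j' φ_i| ≤ n + 1`, so the convection part of an entry is at most `n + 1` times the integral
of `|b|` over it, hence at most `(n+1) W`, while `|φ_j φ_i| ≤ 1` bounds the reaction part by
`∫₀¹ |c|`. A tridiagonal `n × n` matrix has at most `3n` nonzero entries, which gives the
Frobenius bound. -/

section WeightedIntegral

variable {α : Type*} [MeasurableSpace α] {μ : Measure α}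

lemma abs_setIntegral_mul_le {s E : Set α} {f g : α → ℝ} {C : ℝ}
    (hs : MeasurableSet s) (hf : IntegrableOn f s μ) (hg : AEStronglyMeasurable g (μ.restrict s))
    (hgC : ∀ x, |g x| ≤ C) (hgE : ∀ x ∉ E, g x = 0) :
    |∫ x in s, f x * g x ∂μ| ≤ C * ∫ x in s ∩ E, |f x| ∂μ := by
  have hfg : IntegrableOn (fun x => f x * g x) (s ∩ E) μ :=
    IntegrableOn.mono_set (hf.mul_bdd hg (ae_of_all _ hgC)) Set.inter_subset_left
  calc |∫ x in s, f x * g x ∂μ| = |∫ x in s ∩ E, f x * g x ∂μ| := by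
        rw [setIntegral_eq_of_subset_of_forall_sdiff_eq_zero hs Set.inter_subset_left
          fun x hx => by rw [hgE x fun hxE => hx.2 ⟨hx.1, hxE⟩, mul_zero]]
    _ ≤ ∫ x in s ∩ E, C * |f x| ∂μ :=
        norm_integral_le_of_norm_le ((hf.mono_set Set.inter_subset_left).abs.const_mul C)
          (ae_of_all _ fun x => by
            rw [Real.norm_eq_abs, abs_mul, mul_comm]
            exact mul_le_mul_of_nonneg_right (hgC x) (abs_nonneg _))
    _ = C * ∫ x in s ∩ E, |f x| ∂μ := integral_const_mul C _

end WeightedIntegral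

section HatFunctions

def hatSupport (n i : ℕ) : Set ℝ :=
  Set.Ico (((i : ℝ) - 1) * (1 / ((n : ℝ) + 1))) (((i : ℝ) + 1) * (1 / ((n : ℝ) + 1)))

variable (n : ℕ)

lemma measurableSet_hatSupport (i : ℕ) : MeasurableSet (hatSupport n i) := measurableSet_Ico

lemma volume_hatSupport (i : ℕ) :
    volume (hatSupport n i) = ENNReal.ofReal (2 / ((n : ℝ) + 1)) := by
  rw [hatSupport, Real.volume_Ico]
  congr 1
  ring

lemma measurable_hat (i : ℕ) : Measurable (hat n i) :=
  Measurable.ite measurableSet_Ico (by fun_prop)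
    (Measurable.ite measurableSet_Ico (by fun_prop) measurable_const)

lemma measurable_hatDeriv (i : ℕ) : Measurable (hatDeriv n i) :=
  Measurable.ite measurableSet_Ioo measurable_const
    (Measurable.ite measurableSet_Ioo measurable_const measurable_const)

lemma abs_hat_le_one (i : ℕ) (x : ℝ) : |hat n i x| ≤ 1 := by
  have hh : (0 : ℝ) < 1 / ((n : ℝ) + 1) := by positivity
  unfold hat
  split_ifs with h₁ h₂
  · rw [abs_le, le_div_iff₀ hh, div_le_one hh]
    constructor <;> nlinarith [h₁.1, h₁.2]
  · rw [abs_le, le_div_iff₀ hh, div_le_one hh]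
    constructor <;> nlinarith [h₂.1, h₂.2]
  · simp

lemma abs_hatDeriv_le (i : ℕ) (x : ℝ) : |hatDeriv n i x| ≤ (n : ℝ) + 1 := by
  unfold hatDeriv
  have hn : (0 : ℝ) < (n : ℝ) + 1 := by positivity
  split_ifs
  · rw [abs_of_pos hn]
  · rw [abs_neg, abs_of_pos hn]
  · rw [abs_zero]
    exact hn.le

variable {n}

lemma hat_eq_zero_of_notMem {i : ℕ} {x : ℝ} (hx : x ∉ hatSupport n i) : hat n i x = 0 := by
  have hh : (0 : ℝ) < 1 / ((n : ℝ) + 1) := by positivity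
  unfold hat
  split_ifs with h₁ h₂
  · exact absurd ⟨h₁.1, by nlinarith [h₁.2]⟩ hx
  · exact absurd ⟨by nlinarith [h₂.1], h₂.2⟩ hx
  · rfl

lemma hatDeriv_eq_zero_of_notMem {i : ℕ} {x : ℝ} (hx : x ∉ hatSupport n i) :
    hatDeriv n i x = 0 := by
  have hh : (0 : ℝ) < 1 / ((n : ℝ) + 1) := by positivity
  unfold hatDeriv
  split_ifs with h₁ h₂
  · exact absurd ⟨h₁.1.le, by nlinarith [h₁.2]⟩ hx
  · exact absurd ⟨by nlinarith [h₂.1], h₂.2⟩ hx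
  · rfl

lemma disjoint_hatSupport {i j : ℕ} (hij : 1 < ((i : ℤ) - (j : ℤ)).natAbs) :
    Disjoint (hatSupport n i) (hatSupport n j) := by
  have hh : (0 : ℝ) < 1 / ((n : ℝ) + 1) := by positivity
  rw [Set.disjoint_left]
  rintro x ⟨hi₁, hi₂⟩ ⟨hj₁, hj₂⟩
  obtain hfar | hfar : (i : ℝ) + 2 ≤ j ∨ (j : ℝ) + 2 ≤ i := by
    obtain h | h : i + 2 ≤ j ∨ j + 2 ≤ i := by omega
    exacts [.inl (by exact_mod_cast h), .inr (by exact_mod_cast h)]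
  all_goals nlinarith

lemma hatDeriv_mul_hat_eq_zero {i j : ℕ} (hij : 1 < ((i : ℤ) - (j : ℤ)).natAbs) (x : ℝ) :
    hatDeriv n j x * hat n i x = 0 := by
  by_cases hx : x ∈ hatSupport n i
  · rw [hatDeriv_eq_zero_of_notMem (Set.disjoint_left.mp (disjoint_hatSupport hij) hx), zero_mul]
  · rw [hat_eq_zero_of_notMem hx, mul_zero]

lemma hat_mul_hat_eq_zero {i j : ℕ} (hij : 1 < ((i : ℤ) - (j : ℤ)).natAbs) (x : ℝ) :
    hat n j x * hat n i x = 0 := by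
  by_cases hx : x ∈ hatSupport n i
  · rw [hat_eq_zero_of_notMem (Set.disjoint_left.mp (disjoint_hatSupport hij) hx), zero_mul]
  · rw [hat_eq_zero_of_notMem hx, mul_zero]

end HatFunctions

lemma abs_integral_convection_le {n : ℕ} (i j : ℕ) {b : ℝ → ℝ}
    (hb : IntegrableOn b (Set.Icc (0 : ℝ) 1) volume) {W : ℝ}
    (hW : ∀ E : Set ℝ, E ⊆ Set.Icc (0 : ℝ) 1 → MeasurableSet E →
      volume E ≤ ENNReal.ofReal (2 / ((n : ℝ) + 1)) → ∫ x in E, |b x| ≤ W) :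
    |∫ x in (0 : ℝ)..1, b x * hatDeriv n j x * hat n i x| ≤ ((n : ℝ) + 1) * W := by
  have hmass : ∫ x in Set.Ioc (0 : ℝ) 1 ∩ hatSupport n j, |b x| ≤ W :=
    hW _ (Set.inter_subset_left.trans Set.Ioc_subset_Icc_self)
      (measurableSet_Ioc.inter (measurableSet_hatSupport n j))
      ((measure_mono Set.inter_subset_right).trans (volume_hatSupport n j).le)
  simp only [integral_of_le zero_le_one, mul_assoc]
  calc _ ≤ ((n : ℝ) + 1) * ∫ x in Set.Ioc (0 : ℝ) 1 ∩ hatSupport n j, |b x| :=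
        abs_setIntegral_mul_le (g := fun x => hatDeriv n j x * hat n i x) measurableSet_Ioc
          (hb.mono_set Set.Ioc_subset_Icc_self)
          ((measurable_hatDeriv n j).mul (measurable_hat n i)).aestronglyMeasurable
          (fun x => by
            rw [abs_mul, ← mul_one ((n : ℝ) + 1)]
            exact mul_le_mul (abs_hatDeriv_le n j x) (abs_hat_le_one n i x) (abs_nonneg _)
              (by positivity))
          (fun x hx => by rw [hatDeriv_eq_zero_of_notMem hx, zero_mul])
    _ ≤ ((n : ℝ) + 1) * W := mul_le_mul_of_nonneg_left hmass (by positivity)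

lemma abs_integral_reaction_le (n i j : ℕ) {c : ℝ → ℝ}
    (hc : IntegrableOn c (Set.Icc (0 : ℝ) 1) volume) :
    |∫ x in (0 : ℝ)..1, c x * hat n j x * hat n i x| ≤ ∫ x in Set.Icc (0 : ℝ) 1, |c x| := by
  simp only [integral_of_le zero_le_one, mul_assoc]
  calc _ ≤ 1 * ∫ x in Set.Ioc (0 : ℝ) 1 ∩ Set.univ, |c x| :=
        abs_setIntegral_mul_le (g := fun x => hat n j x * hat n i x) measurableSet_Ioc
          (hc.mono_set Set.Ioc_subset_Icc_self)
          ((measurable_hat n j).mul (measurable_hat n i)).aestronglyMeasurable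
          (fun x => by
            rw [abs_mul, ← mul_one (1 : ℝ)]
            exact mul_le_mul (abs_hat_le_one n j x) (abs_hat_le_one n i x) (abs_nonneg _)
              zero_le_one)
          (fun x hx => absurd (Set.mem_univ x) hx)
    _ = ∫ x in Set.Icc (0 : ℝ) 1, |c x| := by
        rw [one_mul, Set.inter_univ, integral_Icc_eq_integral_Ioc]

open Finset in
lemma card_filter_natAbs_sub_le {n : ℕ} (w : ℕ) (i : Fin n) :
    #{j : Fin n | ((i : ℤ) - (j : ℤ)).natAbs ≤ w} ≤ 2 * w + 1 := by
  have hinj := card_le_card_of_injOn (fun j : Fin n => ((j : ℕ) : ℤ))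
    (s := {j : Fin n | ((i : ℤ) - (j : ℤ)).natAbs ≤ w}) (t := Icc ((i : ℤ) - w) (i + w))
    (fun j hj => by
      simp only [coe_filter, mem_univ, true_and, Set.mem_ofPred_eq, coe_Icc, Set.mem_Icc] at hj ⊢
      omega)
    (fun a _ b _ hab => Fin.ext (by simpa using hab))
  rw [Int.card_Icc] at hinj
  omega

lemma frobR_sq_le_of_banded {n : ℕ} (w : ℕ) {X : Matrix (Fin n) (Fin n) ℝ} {M : ℝ}
    (hband : ∀ i j : Fin n, w < ((i : ℤ) - (j : ℤ)).natAbs → X i j = 0)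
    (hbound : ∀ i j, |X i j| ≤ M) :
    frobR X ^ 2 ≤ (2 * w + 1) * n * M ^ 2 := by
  have hrow (i : Fin n) : ∑ j, X i j ^ 2 ≤ (2 * w + 1) * M ^ 2 := by
    rw [← Finset.sum_filter_of_ne (p := fun j : Fin n => ((i : ℤ) - (j : ℤ)).natAbs ≤ w)
      fun j _ hj => not_lt.mp fun hfar => hj (by rw [hband i j hfar, sq, zero_mul])]
    calc _ ≤ _ • M ^ 2 := Finset.sum_le_card_nsmul _ _ _ fun j _ =>
            sq_le_sq' (abs_le.mp (hbound i j)).1 (abs_le.mp (hbound i j)).2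
      _ ≤ (2 * w + 1) * M ^ 2 := by
        rw [nsmul_eq_mul]
        gcongr
        exact_mod_cast card_filter_natAbs_sub_le w i
  rw [frobR, Real.sq_sqrt (by positivity)]
  calc _ ≤ ∑ _i : Fin n, (2 * w + 1) * M ^ 2 := Finset.sum_le_sum fun i _ => hrow i
    _ = (2 * w + 1) * n * M ^ 2 := by
      rw [Finset.sum_const, Finset.card_univ, Fintype.card_fin, nsmul_eq_mul]
      ring

theorem fe_convection_reaction_matrix_bounds_general
    (n : ℕ) (b c : ℝ → ℝ)
    (hb : IntegrableOn b (Set.Icc (0 : ℝ) 1) volume)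
    (hc : IntegrableOn c (Set.Icc (0 : ℝ) 1) volume)
    (W : ℝ)
    (hW : ∀ E : Set ℝ, E ⊆ Set.Icc (0 : ℝ) 1 → MeasurableSet E →
      volume E ≤ ENNReal.ofReal (2 / ((n : ℝ) + 1)) → ∫ x in E, |b x| ≤ W) :
    let Z : Matrix (Fin n) (Fin n) ℝ := Matrix.of fun i j =>
      (∫ x in (0 : ℝ)..1, b x * hatDeriv n ((j : ℕ) + 1) x * hat n ((i : ℕ) + 1) x) +
        ∫ x in (0 : ℝ)..1, c x * hat n ((j : ℕ) + 1) x * hat n ((i : ℕ) + 1) x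
    (∀ i j : Fin n, 1 < ((i : ℤ) - (j : ℤ)).natAbs → Z i j = 0) ∧
    (∀ i j : Fin n,
      |Z i j| ≤ ((n : ℝ) + 1) * W + ∫ x in Set.Icc (0 : ℝ) 1, |c x|) ∧
    (frobR Z) ^ 2 ≤
      3 * (n : ℝ) * (((n : ℝ) + 1) * W + ∫ x in Set.Icc (0 : ℝ) 1, |c x|) ^ 2 := by
  intro Z
  have hband (i j : Fin n) (hij : 1 < ((i : ℤ) - (j : ℤ)).natAbs) : Z i j = 0 := by
    have hfar : 1 < (((i : ℕ) + 1 : ℕ) - ((j : ℕ) + 1 : ℕ) : ℤ).natAbs := by push_cast; omega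
    simp only [Z, Matrix.of_apply, mul_assoc, hatDeriv_mul_hat_eq_zero hfar,
      hat_mul_hat_eq_zero hfar, mul_zero, intervalIntegral.integral_zero, add_zero]
  have hbound (i j : Fin n) : |Z i j| ≤ ((n : ℝ) + 1) * W + ∫ x in Set.Icc (0 : ℝ) 1, |c x| :=
    (abs_add_le _ _).trans <| add_le_add (abs_integral_convection_le _ _ hb hW)
      (abs_integral_reaction_le _ _ _ hc)
  refine ⟨hband, hbound, ?_⟩
  simpa [two_add_one_eq_three] using frobR_sq_le_of_banded 1 hband hbound

/-- Estimates for the FE convection-plus-reaction matrix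
`(Z_n)_{ij} = ∫₀¹ b φ_j' φ_i + ∫₀¹ c φ_j φ_i` with integrable `b, c`: if `W` bounds
`∫_E |b|` over all measurable `E ⊆ [0,1]` of measure `≤ 2/(n+1)`, then `Z_n` is
tridiagonal, `|(Z_n)_{ij}| ≤ (n+1)W + ∫₀¹|c|`, and `‖Z_n‖₂² ≤ 3n[(n+1)W + ∫₀¹|c|]²`. -/
theorem fe_convection_reaction_matrix_bounds
    (n : ℕ) (hn : 1 ≤ n) (b c : ℝ → ℝ)
    (hb : IntegrableOn b (Set.Icc (0 : ℝ) 1) volume)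
    (hc : IntegrableOn c (Set.Icc (0 : ℝ) 1) volume)
    (W : ℝ)
    (hW : ∀ E : Set ℝ, E ⊆ Set.Icc (0 : ℝ) 1 → MeasurableSet E →
      volume E ≤ ENNReal.ofReal (2 / ((n : ℝ) + 1)) → ∫ x in E, |b x| ≤ W) :
    let Z : Matrix (Fin n) (Fin n) ℝ := Matrix.of fun i j =>
      (∫ x in (0 : ℝ)..1, b x * hatDeriv n ((j : ℕ) + 1) x * hat n ((i : ℕ) + 1) x) +
        ∫ x in (0 : ℝ)..1, c x * hat n ((j : ℕ) + 1) x * hat n ((i : ℕ) + 1) x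
    (∀ i j : Fin n, 1 < ((i : ℤ) - (j : ℤ)).natAbs → Z i j = 0) ∧
    (∀ i j : Fin n,
      |Z i j| ≤ ((n : ℝ) + 1) * W + ∫ x in Set.Icc (0 : ℝ) 1, |c x|) ∧
    (frobR Z) ^ 2 ≤
      3 * (n : ℝ) * (((n : ℝ) + 1) * W + ∫ x in Set.Icc (0 : ℝ) 1, |c x|) ^ 2 :=
  fe_convection_reaction_matrix_bounds_general n b c hb hc W hW
end
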